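/- arXiv:1302.6357 — 3 statements merged into one kernel-verified Lean document; each statement's English description precedes it below -/
import Mathlib

section
/- Let V be a vertex operator algebra, M an admissible V-module, and n ≥ 0. Then V *_n O_n(M) ⊆ O_n(M) and O_n(M) *_n V ⊆ O_n(M); in particular the quotient 𝔸_n(M) = M / O_n(M) carries well-defined left and right actions of V. -/
open Finset

/-- The generalized binomial coefficient `C(a, i)` for `a : ℤ`, as a complex number. -/
noncomputable def zchoose (a : ℤ) (i : ℕ) : ℂ := ((Ring.choose a i : ℤ) : ℂ)

variable {V M : Type*} [AddCommGroup V] [Module ℂ V] [AddCommGroup M] [Module ℂ M]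

/-- `u ∘ₙ w = Res_z Y(u,z)w (1+z)^{d+n}/z^{2n+2}` for `u` homogeneous of weight `d`. -/
noncomputable def circn (Y : V →ₗ[ℂ] ℤ → M →ₗ[ℂ] M) (n : ℕ) (d : ℤ) (u : V) (w : M) : M :=
  ∑ᶠ i : ℕ, zchoose (d + n) i • Y u ((i : ℤ) - 2 * n - 2) w

/-- `O_n(M)`: the span of all `u ∘ₙ w` for `u` homogeneous and `w ∈ M`. -/
noncomputable def On (Y : V →ₗ[ℂ] ℤ → M →ₗ[ℂ] M) (gr : ℤ → Submodule ℂ V) (n : ℕ) :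
    Submodule ℂ M :=
  Submodule.span ℂ {x | ∃ (d : ℤ) (u : V) (w : M), u ∈ gr d ∧ x = circn Y n d u w}

/-- The left product
`u *ₙ w = ∑_{m=0}^n (-1)^m C(m+n,n) Res_z Y(u,z)w (1+z)^{d+n}/z^{n+m+1}`
for `u` homogeneous of weight `d`. -/
noncomputable def lstar (Y : V →ₗ[ℂ] ℤ → M →ₗ[ℂ] M) (n : ℕ) (d : ℤ) (u : V) (w : M) : M :=
  ∑ m ∈ range (n + 1), ∑ᶠ i : ℕ,
    ((-1 : ℂ) ^ m * ((m + n).choose n : ℂ) * zchoose (d + n) i) •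
      Y u ((i : ℤ) - m - n - 1) w

/-- The right product
`w *ₙ u = ∑_{m=0}^n (-1)^m C(m+n,n) Res_z Y(u,z)w (1+z)^{d+m-1}/z^{n+m+1}`
for `u` homogeneous of weight `d`. -/
noncomputable def rstar (Y : V →ₗ[ℂ] ℤ → M →ₗ[ℂ] M) (n : ℕ) (d : ℤ) (u : V) (w : M) : M :=
  ∑ m ∈ range (n + 1), ∑ᶠ i : ℕ,
    ((-1 : ℂ) ^ m * ((m + n).choose n : ℂ) * zchoose (d + m - 1) i) •
      Y u ((i : ℤ) - m - n - 1) w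

/-!
Write `Res(u, c, b) w = Res_z Y(u,z)w (1+z)^c z^{-b}` for `u` homogeneous of weight `d`, so that
`u ∘ₙ w = Res(u, d + n, 2n + 2) w`, and both `u *ₙ w` and `w *ₙ u` are combinations of the
`Res(u, c, n + m + 1) w` with `d - 1 ≤ c ≤ d + n + m`.

First, `O_n(M)` contains `Res(u, c, b) w` whenever `d + n ≤ c` and `c + n + 2 ≤ d + b`. Along the
diagonal `c - d - n = b - 2n - 2` this follows from `Y(L(-1)u, z) = ∂_z Y(u, z)` by integrating by
parts, which raises both exponents by one and the weight of `u` by one; off the diagonal it follows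
from Pascal's rule `(1+z)^{c+1} = (1+z)^c + z (1+z)^c`.

Second, the commutator formula, with `(1+z)^c z^{-P}` re-expanded in powers of `z - w`, writes
`Res(u, c, P) (v ∘ₙ x)` as `v ∘ₙ Res(u, c, P) x` plus a combination of the
`Res(u_i v, c - a + e + n, P + 2n + 2 + i - a) x` with `a ≤ i`, where `e` is the weight of `v`.
As `u_i v` has weight `d + e - i - 1`, all of these lie in `O_n(M)` by the first step as soon as
`d - 1 ≤ c ≤ d + P - 1`. So `O_n(M)` is stable under both products.
-/

open Filter

section Binomial

lemma zchoose_zero_right (a : ℤ) : zchoose a 0 = 1 := by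
  simp [zchoose]

lemma zchoose_zero_left {i : ℕ} (hi : i ≠ 0) : zchoose 0 i = 0 := by
  simp [zchoose, Ring.choose_zero_pos ℤ (Nat.pos_of_ne_zero hi)]

lemma zchoose_natCast_of_lt {j a : ℕ} (h : j < a) : zchoose j a = 0 := by
  simp [zchoose, Ring.choose_natCast, Nat.choose_eq_zero_of_lt h]

lemma zchoose_succ_succ (a : ℤ) (i : ℕ) :
    zchoose (a + 1) (i + 1) = zchoose a i + zchoose a (i + 1) := by
  simp [zchoose, Ring.choose_succ_succ]

lemma succ_mul_zchoose_succ (a : ℤ) (i : ℕ) :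
    ((i : ℂ) + 1) * zchoose (a + 1) (i + 1) = ((a : ℂ) + 1) * zchoose a i := by
  have h := Ring.choose_smul_choose (a + 1) (n := i + 1) (Nat.le_add_left 1 i)
  simp only [Nat.choose_one_right, Ring.choose_one_right, nsmul_eq_mul, Nat.cast_one,
    add_sub_cancel_right] at h
  simpa [zchoose] using congrArg (Int.cast : ℤ → ℂ) h

lemma zchoose_add (x y : ℤ) (s : ℕ) :
    zchoose (x + y) s = ∑ j ∈ range (s + 1), zchoose x j * zchoose y (s - j) := by
  have h := Ring.add_choose_eq s (Commute.all x y)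
  rw [Finset.Nat.sum_antidiagonal_eq_sum_range_succ_mk] at h
  simp [zchoose, h]

lemma zchoose_mul_zchoose_natCast (c : ℤ) {a j : ℕ} (h : a ≤ j) :
    zchoose c j * zchoose j a = zchoose c a * zchoose (c - a) (j - a) := by
  have h' := Ring.choose_smul_choose c h
  rw [nsmul_eq_mul] at h'
  simpa [zchoose, Ring.choose_natCast, mul_comm] using congrArg (Int.cast : ℤ → ℂ) h'

end Binomial

section Sequences

lemma finsum_eq_sum_range_of_eq_zero {A : Type*} [AddCommMonoid A] {f : ℕ → A} {N : ℕ}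
    (hf : ∀ i, N ≤ i → f i = 0) : ∑ᶠ i, f i = ∑ i ∈ range N, f i := by
  refine finsum_eq_finsetSum_of_support_subset f fun i hi => ?_
  by_contra h
  exact hi (hf i (by simpa using h))

lemma sum_range_add_eq_sum_Ico {A : Type*} [AddCommMonoid A] {f : ℕ → A} {N : ℕ}
    (hf : ∀ s, N ≤ s → f s = 0) (a : ℕ) :
    ∑ j ∈ range N, f (j + a) = ∑ s ∈ Ico a N, f s := by
  rw [Finset.sum_Ico_eq_sum_range, ← Finset.sum_subset (range_subset_range.2 (Nat.sub_le N a))]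
  · simp only [add_comm]
  · intro j _ hj
    exact hf _ (by simp at hj; omega)

lemma sum_range_zchoose_succ_smul (c : ℤ) (f : ℕ → M) (N : ℕ) :
    ∑ j ∈ range (N + 1), zchoose (c + 1) j • f j =
      ∑ j ∈ range (N + 1), zchoose c j • f j + ∑ j ∈ range N, zchoose c j • f (j + 1) := by
  simp only [Finset.sum_range_succ' _ N, zchoose_succ_succ, add_smul, Finset.sum_add_distrib,
    zchoose_zero_right]
  abel

lemma sum_range_natCast_mul_zchoose_succ_smul (c : ℤ) (f : ℕ → M) (N : ℕ) :
    ∑ j ∈ range (N + 1), ((j : ℂ) * zchoose (c + 1) j) • f j =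
      ((c : ℂ) + 1) • ∑ j ∈ range N, zchoose c j • f (j + 1) := by
  simp only [Finset.sum_range_succ' _ N, Finset.smul_sum, smul_smul, Nat.cast_add, Nat.cast_one,
    succ_mul_zchoose_succ, Nat.cast_zero, zero_mul, zero_smul, add_zero]

lemma sum_range_zchoose_mul_natCast_smul {f : ℕ → M} {N : ℕ} (hf : ∀ s, N ≤ s → f s = 0)
    (c : ℤ) (a : ℕ) :
    ∑ j ∈ range N, (zchoose c j * zchoose j a) • f j =
      zchoose c a • ∑ j ∈ range N, zchoose (c - a) j • f (j + a) := by
  have hshift := sum_range_add_eq_sum_Ico (f := fun s => zchoose (c - a) (s - a) • f s)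
    (fun s hs => by rw [hf s hs, smul_zero]) a
  simp only [Nat.add_sub_cancel] at hshift
  have hsub : Ico a N ⊆ range N := fun j hj => by simp at hj ⊢; omega
  rw [hshift, Finset.smul_sum, ← Finset.sum_subset hsub fun j hjN hj => ?_]
  · refine Finset.sum_congr rfl fun j hj => ?_
    rw [smul_smul, zchoose_mul_zchoose_natCast c (Finset.mem_Ico.1 hj).1]
  · simp only [mem_range, mem_Ico, not_and, not_lt] at hjN hj
    rw [zchoose_natCast_of_lt (by omega), mul_zero, zero_smul]

lemma sum_range_zchoose_mul_add_smul {f : ℕ → M} {N : ℕ} (hf : ∀ s, N ≤ s → f s = 0)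
    (c r : ℤ) (i : ℕ) :
    ∑ j ∈ range N, (zchoose c j * zchoose (j + r) i) • f j =
      ∑ a ∈ range (i + 1), (zchoose c a * zchoose r (i - a)) •
        ∑ j ∈ range N, zchoose (c - a) j • f (j + a) := by
  simp_rw [zchoose_add, Finset.mul_sum, Finset.sum_smul]
  rw [Finset.sum_comm]
  refine Finset.sum_congr rfl fun a _ => ?_
  rw [mul_comm (zchoose c a), mul_smul, ← sum_range_zchoose_mul_natCast_smul hf, Finset.smul_sum]
  refine Finset.sum_congr rfl fun j _ => ?_
  rw [smul_smul, mul_comm (zchoose r _), mul_assoc]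

lemma sum_range_sum_range_zchoose_mul_smul {f : ℕ → M} {N : ℕ} (hf : ∀ s, N ≤ s → f s = 0)
    (c₁ c₂ : ℤ) :
    ∑ j ∈ range N, ∑ l ∈ range N, (zchoose c₁ j * zchoose c₂ l) • f (j + l) =
      ∑ s ∈ range N, zchoose (c₁ + c₂) s • f s := by
  have hshift (j : ℕ) := sum_range_add_eq_sum_Ico
    (f := fun s => (zchoose c₁ j * zchoose c₂ (s - j)) • f s)
    (fun s hs => by rw [hf s hs, smul_zero]) j
  simp only [Nat.add_sub_cancel] at hshift
  simp_rw [add_comm _ (_ : ℕ)] at hshift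
  rw [Finset.sum_congr rfl fun j _ => hshift j, Finset.range_eq_Ico, Finset.sum_Ico_Ico_comm]
  refine Finset.sum_congr rfl fun s _ => ?_
  rw [zchoose_add, Finset.sum_smul, Finset.range_eq_Ico]

lemma sum_range_sum_range_zchoose_mul_zchoose_add_smul {f : ℕ → M} {N : ℕ}
    (hf : ∀ s, N ≤ s → f s = 0) (c₁ c₂ r : ℤ) (i : ℕ) :
    ∑ j ∈ range N, ∑ l ∈ range N, (zchoose c₁ j * zchoose c₂ l * zchoose (j + r) i) • f (j + l) =
      ∑ a ∈ range (i + 1), (zchoose c₁ a * zchoose r (i - a)) •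
        ∑ s ∈ range N, zchoose (c₁ - a + c₂) s • f (s + a) := by
  have hreindex (l : ℕ) := sum_range_zchoose_mul_add_smul (N := N) (f := fun j => f (j + l))
    (fun j hj => hf _ (by omega)) c₁ r i
  have hmerge (a : ℕ) := sum_range_sum_range_zchoose_mul_smul (N := N) (f := fun s => f (s + a))
    (fun s hs => hf _ (by omega)) (c₁ - a) c₂
  calc _ = ∑ l ∈ range N, zchoose c₂ l •
        ∑ j ∈ range N, (zchoose c₁ j * zchoose (j + r) i) • f (j + l) := by
        rw [Finset.sum_comm]
        simp_rw [Finset.smul_sum, smul_smul]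
        refine Finset.sum_congr rfl fun l _ => Finset.sum_congr rfl fun j _ => ?_
        rw [mul_right_comm, mul_comm]
    _ = _ := by
      simp_rw [hreindex, ← hmerge, Finset.smul_sum, smul_smul]
      rw [Finset.sum_comm]
      refine Finset.sum_congr rfl fun a _ => ?_
      rw [Finset.sum_comm]
      refine Finset.sum_congr rfl fun j _ => Finset.sum_congr rfl fun l _ => ?_
      rw [add_right_comm]
      congr 1
      ring

end Sequences

section Residue

def IsTruncated {W : Type*} [AddCommGroup W] [Module ℂ W] (Y : V →ₗ[ℂ] ℤ → W →ₗ[ℂ] W) : Prop :=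
  ∀ (u : V) (w : W), ∃ K : ℕ, ∀ i : ℤ, (K : ℤ) ≤ i → Y u i w = 0

def BorcherdsIdentity (YV : V →ₗ[ℂ] ℤ → V →ₗ[ℂ] V) (Y : V →ₗ[ℂ] ℤ → M →ₗ[ℂ] M) : Prop :=
  ∀ (u v : V) (w : M) (p q r : ℤ),
    (∑ᶠ i : ℕ, zchoose p i • Y (YV u (r + i) v) (p + q - i) w)
      = (∑ᶠ i : ℕ, ((-1 : ℂ) ^ i * zchoose r i) • Y u (p + r - i) (Y v (q + i) w))
        - ∑ᶠ i : ℕ, ((-1 : ℂ) ^ i * zchoose r i * (-1 : ℂ) ^ r) •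
            Y v (q + r - i) (Y u (p + i) w)

/-- `Res_z Y(u,z)w (1+z)^c z^{-b}`. -/
noncomputable def residue (Y : V →ₗ[ℂ] ℤ → M →ₗ[ℂ] M) (u : V) (c b : ℤ) (w : M) : M :=
  ∑ᶠ i : ℕ, zchoose c i • Y u (i - b) w

variable {Y : V →ₗ[ℂ] ℤ → M →ₗ[ℂ] M}

lemma IsTruncated.eventually_eq_zero (htr : IsTruncated Y) (u : V) (w : M) (b : ℤ) :
    ∀ᶠ i : ℕ in atTop, Y u (i - b) w = 0 := by
  obtain ⟨K, hK⟩ := htr u w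
  exact eventually_atTop.2 ⟨(K + b).toNat, fun i hi => hK _ (by omega)⟩

lemma residue_eq_sum_range {u : V} {c b : ℤ} {w : M} {N : ℕ}
    (h : ∀ i, N ≤ i → Y u (i - b) w = 0) :
    residue Y u c b w = ∑ i ∈ range N, zchoose c i • Y u (i - b) w :=
  finsum_eq_sum_range_of_eq_zero fun i hi => by rw [h i hi, smul_zero]

lemma residue_add (htr : IsTruncated Y) (u : V) (c b : ℤ) (w₁ w₂ : M) :
    residue Y u c b (w₁ + w₂) = residue Y u c b w₁ + residue Y u c b w₂ := by
  obtain ⟨N, hN⟩ := eventually_atTop.1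
    ((htr.eventually_eq_zero u w₁ b).and (htr.eventually_eq_zero u w₂ b))
  rw [residue_eq_sum_range fun i hi => (hN i hi).1, residue_eq_sum_range fun i hi => (hN i hi).2,
    residue_eq_sum_range fun i hi => by rw [map_add, (hN i hi).1, (hN i hi).2, add_zero]]
  simp only [map_add, smul_add, Finset.sum_add_distrib]

lemma residue_smul (htr : IsTruncated Y) (u : V) (c b : ℤ) (t : ℂ) (w : M) :
    residue Y u c b (t • w) = t • residue Y u c b w := by
  obtain ⟨N, hN⟩ := eventually_atTop.1 (htr.eventually_eq_zero u w b)
  rw [residue_eq_sum_range hN,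
    residue_eq_sum_range fun i hi => by rw [map_smul, hN i hi, smul_zero]]
  simp only [map_smul, Finset.smul_sum, smul_comm t]

noncomputable def residueₗ (htr : IsTruncated Y) (u : V) (c b : ℤ) : M →ₗ[ℂ] M where
  toFun := residue Y u c b
  map_add' := residue_add htr u c b
  map_smul' := residue_smul htr u c b

lemma residueₗ_apply (htr : IsTruncated Y) (u : V) (c b : ℤ) (w : M) :
    residueₗ htr u c b w = residue Y u c b w := rfl

lemma residue_add_one (htr : IsTruncated Y) (u : V) (c b : ℤ) (w : M) :
    residue Y u (c + 1) b w = residue Y u c b w + residue Y u c (b - 1) w := by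
  obtain ⟨N, hN⟩ := eventually_atTop.1 (htr.eventually_eq_zero u w b)
  have hN' (i : ℕ) (hi : N + 1 ≤ i) : Y u (i - b) w = 0 := hN i (by omega)
  rw [residue_eq_sum_range hN', residue_eq_sum_range hN',
    residue_eq_sum_range (N := N) fun i hi => ?_, sum_range_zchoose_succ_smul]
  · simp only [Nat.cast_add, Nat.cast_one, sub_sub_eq_add_sub, add_sub_right_comm]
  · convert hN (i + 1) (by omega) using 3
    push_cast
    ring

lemma residue_deriv (htr : IsTruncated Y) {T : V → V}
    (hT : ∀ (u : V) (i : ℤ) (w : M), Y (T u) i w = (-(i : ℂ)) • Y u (i - 1) w) (u : V) (c b : ℤ) (w : M) :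
    residue Y (T u) (c + 1) b w =
      (b : ℂ) • residue Y u (c + 1) (b + 1) w - ((c : ℂ) + 1) • residue Y u c b w := by
  obtain ⟨N, hN⟩ := eventually_atTop.1 (htr.eventually_eq_zero u w (b + 1))
  set f : ℕ → M := fun i => Y u (i - (b + 1)) w
  have hshift (i : ℕ) : f (i + 1) = Y u (i - b) w := by
    simp only [f, Nat.cast_add, Nat.cast_one, add_sub_add_right_eq_sub]
  have hf : ∀ i, N ≤ i → f i = 0 := hN
  have hTf (i : ℕ) : Y (T u) (i - b) w = ((b : ℂ) - i) • f i := by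
    rw [hT]
    congr 1
    · push_cast; ring
    · rw [sub_sub]
  calc residue Y (T u) (c + 1) b w
      = ∑ i ∈ range (N + 1), ((b : ℂ) * zchoose (c + 1) i - i * zchoose (c + 1) i) • f i := by
        rw [residue_eq_sum_range (N := N + 1) fun i hi => by rw [hTf, hf i (by omega), smul_zero]]
        simp only [hTf, smul_smul]
        congr! 2 with i
        ring
    _ = (b : ℂ) • ∑ i ∈ range (N + 1), zchoose (c + 1) i • f i -
          ((c : ℂ) + 1) • ∑ i ∈ range N, zchoose c i • f (i + 1) := by
        rw [← sum_range_natCast_mul_zchoose_succ_smul, Finset.smul_sum]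
        simp only [sub_smul, Finset.sum_sub_distrib, mul_smul]
    _ = _ := by
        rw [residue_eq_sum_range (N := N + 1) fun i hi => hN i (by omega),
          residue_eq_sum_range (N := N) fun i hi => by rw [← hshift]; exact hN _ (by omega)]
        simp only [hshift, f]

end Residue

section Commutator

variable {Y : V →ₗ[ℂ] ℤ → M →ₗ[ℂ] M} {YV : V →ₗ[ℂ] ℤ → V →ₗ[ℂ] V}

lemma finsum_neg_one_pow_mul_zchoose_zero_smul (g : ℕ → M) :
    ∑ᶠ i : ℕ, ((-1 : ℂ) ^ i * zchoose 0 i) • g i = g 0 := by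
  rw [finsum_eq_single _ 0 fun i hi => by rw [zchoose_zero_left hi, mul_zero, zero_smul]]
  simp [zchoose_zero_right]

lemma mode_commutator (hB : BorcherdsIdentity YV Y) {u v : V} {K : ℕ}
    (hK : ∀ i, K ≤ i → YV u i v = 0) (p q : ℤ) (x : M) :
    Y u p (Y v q x) =
      Y v q (Y u p x) + ∑ i ∈ range K, zchoose p i • Y (YV u i v) (p + q - i) x := by
  have h := hB u v x p q 0
  simp only [zero_add, add_zero, zpow_zero, mul_one, finsum_neg_one_pow_mul_zchoose_zero_smul,
    Nat.cast_zero, sub_zero] at h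
  rw [finsum_eq_sum_range_of_eq_zero fun i hi => by simp [hK i hi]] at h
  rw [h]
  abel

lemma residue_residue_comm (htr : IsTruncated Y) (hB : BorcherdsIdentity YV Y) {u v : V} {K : ℕ}
    (hK : ∀ i, K ≤ i → YV u i v = 0) (c P c₂ Q : ℤ) (x : M) :
    residue Y u c P (residue Y v c₂ Q x) = residue Y v c₂ Q (residue Y u c P x) +
      ∑ i ∈ range K, ∑ a ∈ range (i + 1), (zchoose c a * zchoose (-P) (i - a)) •
        residue Y (YV u i v) (c - a + c₂) (P + Q + i - a) x := by
  set g : ℕ → ℕ → M := fun i s => Y (YV u i v) (s - (P + Q + i)) x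
  obtain ⟨N, hN⟩ := eventually_atTop.1 <|
    (htr.eventually_eq_zero u (residue Y v c₂ Q x) P).and <|
    (htr.eventually_eq_zero v x Q).and <|
    (htr.eventually_eq_zero v (residue Y u c P x) Q).and <|
    (htr.eventually_eq_zero u x P).and <|
    (eventually_all_finset (range K)).2 fun i _ => htr.eventually_eq_zero (YV u i v) x (P + Q + i)
  have hg (i : ℕ) (hi : i ∈ range K) (s : ℕ) (hs : N ≤ s) : g i s = 0 := (hN s hs).2.2.2.2 i hi
  have hshift (i a s : ℕ) : Y (YV u i v) (s - (P + Q + i - a)) x = g i (s + a) := by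
    simp only [g]
    rw [show (s : ℤ) - (P + Q + i - a) = ((s + a : ℕ) : ℤ) - (P + Q + i) by push_cast; ring]
  have hcomm (j l : ℕ) : Y u (j - P) (Y v (l - Q) x) =
      Y v (l - Q) (Y u (j - P) x) + ∑ i ∈ range K, zchoose (j + -P) i • g i (j + l) := by
    rw [mode_commutator hB hK]
    congr! 3 with i
    rw [show (j : ℤ) - P + (l - Q) - i = ((j + l : ℕ) : ℤ) - (P + Q + i) by push_cast; ring]
  calc _ = ∑ j ∈ range N, ∑ l ∈ range N,
        (zchoose c j * zchoose c₂ l) • Y u (j - P) (Y v (l - Q) x) := by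
        rw [residue_eq_sum_range fun j hj => (hN j hj).1,
          residue_eq_sum_range fun l hl => (hN l hl).2.1]
        simp_rw [map_sum, map_smul, Finset.smul_sum, smul_smul]
    _ = ∑ j ∈ range N, ∑ l ∈ range N,
          (zchoose c j * zchoose c₂ l) • Y v (l - Q) (Y u (j - P) x) +
        ∑ i ∈ range K, ∑ j ∈ range N, ∑ l ∈ range N,
          (zchoose c j * zchoose c₂ l * zchoose (j + -P) i) • g i (j + l) := by
        simp_rw [hcomm, smul_add, Finset.sum_add_distrib, Finset.smul_sum, smul_smul]
        congr 1
        exact (Finset.sum_congr rfl fun j _ => Finset.sum_comm).trans Finset.sum_comm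
    _ = _ := by
        congr 1
        · rw [residue_eq_sum_range fun l hl => (hN l hl).2.2.1,
            residue_eq_sum_range fun j hj => (hN j hj).2.2.2.1]
          simp_rw [map_sum, map_smul, Finset.smul_sum, smul_smul]
          rw [Finset.sum_comm]
          simp_rw [mul_comm (zchoose c _)]
        · refine Finset.sum_congr rfl fun i hi => ?_
          rw [sum_range_sum_range_zchoose_mul_zchoose_add_smul (hg i hi)]
          refine Finset.sum_congr rfl fun a _ => ?_
          rw [residue_eq_sum_range (N := N) fun s hs => by
            rw [hshift i a]; exact hg i hi _ (by omega)]
          simp only [hshift]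

end Commutator

section ZhuBimodule

variable {Y : V →ₗ[ℂ] ℤ → M →ₗ[ℂ] M} {YV : V →ₗ[ℂ] ℤ → V →ₗ[ℂ] V} {gr : ℤ → Submodule ℂ V}
  {n : ℕ}

lemma circn_eq_residue (d : ℤ) (u : V) (w : M) :
    circn Y n d u w = residue Y u (d + n) (2 * n + 2) w := by
  simp only [circn, residue, sub_sub]

lemma circn_mem_On {d : ℤ} {u : V} (hu : u ∈ gr d) (w : M) : circn Y n d u w ∈ On Y gr n :=
  Submodule.subset_span ⟨d, u, w, hu, rfl⟩

lemma residue_diagonal_mem_On (htr : IsTruncated Y) {T : V → V}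
    (hT : ∀ (u : V) (i : ℤ) (w : M), Y (T u) i w = (-(i : ℂ)) • Y u (i - 1) w)
    (hTgr : ∀ d u, u ∈ gr d → T u ∈ gr (d + 1)) (k : ℕ) {d : ℤ} {u : V} (hu : u ∈ gr d)
    (w : M) : residue Y u (d + n + k) (2 * n + 2 + k) w ∈ On Y gr n := by
  induction k generalizing d u with
  | zero =>
    rw [Nat.cast_zero, add_zero, add_zero, ← circn_eq_residue]
    exact circn_mem_On hu w
  | succ k ih =>
    have hTu := ih (hTgr d u hu)
    have hder := residue_deriv htr hT u (d + n + k) (2 * n + 2 + k) w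
    have hb : ((2 * n + 2 + k : ℤ) : ℂ) ≠ 0 := by norm_cast; omega
    rw [← Submodule.smul_mem_iff _ hb]
    push_cast at hder hTu ⊢
    rw [← add_assoc, ← add_assoc, eq_add_of_sub_eq hder.symm]
    refine add_mem ?_ (Submodule.smul_mem _ _ (ih hu))
    convert hTu using 2
    ring

lemma residue_mem_On (htr : IsTruncated Y) {T : V → V}
    (hT : ∀ (u : V) (i : ℤ) (w : M), Y (T u) i w = (-(i : ℂ)) • Y u (i - 1) w)
    (hTgr : ∀ d u, u ∈ gr d → T u ∈ gr (d + 1)) {d c b : ℤ} {u : V} (hu : u ∈ gr d)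
    (hc : d + n ≤ c) (hb : c + n + 2 ≤ d + b) (w : M) : residue Y u c b w ∈ On Y gr n := by
  obtain ⟨t, ht⟩ : ∃ t : ℕ, d + b = c + n + 2 + t := ⟨(d + b - (c + n + 2)).toNat, by omega⟩
  induction t generalizing c b with
  | zero =>
    obtain ⟨k, rfl⟩ : ∃ k : ℕ, c = d + n + k := ⟨(c - d - n).toNat, by omega⟩
    obtain rfl : b = 2 * n + 2 + k := by omega
    exact residue_diagonal_mem_On htr hT hTgr k hu w
  | succ t ih =>
    rw [eq_sub_of_add_eq (residue_add_one htr u c b w).symm]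
    push_cast at ht
    exact sub_mem (ih (by omega) (by omega) (by omega)) (ih hc (by omega) (by omega))

lemma residue_circn_mem_On (htr : IsTruncated Y) (htrV : IsTruncated YV)
    (hB : BorcherdsIdentity YV Y)
    (hgr : ∀ (d e : ℤ) (u v : V), u ∈ gr d → v ∈ gr e → ∀ i : ℤ, YV u i v ∈ gr (d + e - i - 1))
    {T : V → V} (hT : ∀ (u : V) (i : ℤ) (w : M), Y (T u) i w = (-(i : ℂ)) • Y u (i - 1) w)
    (hTgr : ∀ d u, u ∈ gr d → T u ∈ gr (d + 1)) {d e c P : ℤ} {u v : V} (hu : u ∈ gr d)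
    (hv : v ∈ gr e) (hc₁ : d - 1 ≤ c) (hc₂ : c ≤ d + P - 1) (x : M) :
    residue Y u c P (circn Y n e v x) ∈ On Y gr n := by
  obtain ⟨K, hK⟩ := htrV u v
  rw [circn_eq_residue, residue_residue_comm htr hB (K := K) fun i hi => hK i (by omega),
    ← circn_eq_residue]
  refine add_mem (circn_mem_On hv _) (sum_mem fun i _ => sum_mem fun a ha => ?_)
  have hai : a ≤ i := Nat.lt_succ_iff.1 (mem_range.1 ha)
  exact Submodule.smul_mem _ _
    (residue_mem_On htr hT hTgr (hgr d e u v hu hv i) (by omega) (by omega) x)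

end ZhuBimodule

section Products

variable {Y : V →ₗ[ℂ] ℤ → M →ₗ[ℂ] M} {YV : V →ₗ[ℂ] ℤ → V →ₗ[ℂ] V} {gr : ℤ → Submodule ℂ V}

noncomputable def residueSumₗ (htr : IsTruncated Y) (n : ℕ) (u : V) (s : ℕ → ℂ) (c : ℕ → ℤ) :
    M →ₗ[ℂ] M :=
  ∑ m ∈ range (n + 1), s m • residueₗ htr u (c m) (m + n + 1)

lemma residueSumₗ_apply (htr : IsTruncated Y) (n : ℕ) (u : V) (s : ℕ → ℂ) (c : ℕ → ℤ) (w : M) :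
    residueSumₗ htr n u s c w = ∑ m ∈ range (n + 1), s m • residue Y u (c m) (m + n + 1) w := by
  simp [residueSumₗ, residueₗ_apply]

lemma lstar_eq_residueSumₗ (htr : IsTruncated Y) (n : ℕ) (d : ℤ) (u : V) (w : M) :
    lstar Y n d u w =
      residueSumₗ htr n u (fun m => (-1 : ℂ) ^ m * ((m + n).choose n : ℂ)) (fun _ => d + n) w := by
  simp only [residueSumₗ_apply, lstar, residue, smul_finsum, smul_smul, sub_sub]

lemma rstar_eq_residueSumₗ (htr : IsTruncated Y) (n : ℕ) (d : ℤ) (u : V) (w : M) :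
    rstar Y n d u w =
      residueSumₗ htr n u (fun m => (-1 : ℂ) ^ m * ((m + n).choose n : ℂ))
        (fun m => d + m - 1) w := by
  simp only [residueSumₗ_apply, rstar, residue, smul_finsum, smul_smul, sub_sub]

lemma On_le_comap_residueSumₗ (htr : IsTruncated Y) (htrV : IsTruncated YV)
    (hB : BorcherdsIdentity YV Y)
    (hgr : ∀ (d e : ℤ) (u v : V), u ∈ gr d → v ∈ gr e → ∀ i : ℤ, YV u i v ∈ gr (d + e - i - 1))
    {T : V → V} (hT : ∀ (u : V) (i : ℤ) (w : M), Y (T u) i w = (-(i : ℂ)) • Y u (i - 1) w)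
    (hTgr : ∀ d u, u ∈ gr d → T u ∈ gr (d + 1)) {n : ℕ} {d : ℤ} {u : V} (hu : u ∈ gr d)
    (s : ℕ → ℂ) {c : ℕ → ℤ} (hc : ∀ m, d - 1 ≤ c m ∧ c m ≤ d + n + m) :
    On Y gr n ≤ (On Y gr n).comap (residueSumₗ htr n u s c) := by
  refine Submodule.span_le.2 ?_
  rintro _ ⟨e, v, x, hv, rfl⟩
  rw [SetLike.mem_coe, Submodule.mem_comap, residueSumₗ_apply]
  exact sum_mem fun m _ => Submodule.smul_mem _ _ <|
    residue_circn_mem_On htr htrV hB hgr hT hTgr hu hv (hc m).1 (by have := (hc m).2; omega) x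

end Products

theorem statement8_general
    (YV : V →ₗ[ℂ] ℤ → V →ₗ[ℂ] V) (Y : V →ₗ[ℂ] ℤ → M →ₗ[ℂ] M)
    (gr : ℤ → Submodule ℂ V) (ω : V)
    -- truncation conditions
    (htr : ∀ (u : V) (w : M), ∃ K : ℕ, ∀ i : ℤ, (K : ℤ) ≤ i → Y u i w = 0)
    (htrV : ∀ u v : V, ∃ K : ℕ, ∀ i : ℤ, (K : ℤ) ≤ i → YV u i v = 0)
    -- grading: `u_i` maps `gr e` into `gr (d + e - i - 1)`, `ω` has weight `2`
    (hgr : ∀ (d e : ℤ) (u v : V), u ∈ gr d → v ∈ gr e →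
      ∀ i : ℤ, YV u i v ∈ gr (d + e - i - 1))
    (hω : ω ∈ gr 2)
    -- `L(0)` eigenvalue property and the `L(-1)`-derivative property on `M` and on `V`
    (hL1der : ∀ (u : V) (i : ℤ) (w : M), Y (YV ω 0 u) i w = (-(i : ℂ)) • Y u (i - 1) w)
    -- the Borcherds (Jacobi) identity for the module `M` and for `V` itself
    (hB : ∀ (u v : V) (w : M) (p q r : ℤ),
      (∑ᶠ i : ℕ, zchoose p i • Y (YV u (r + i) v) (p + q - i) w)
        = (∑ᶠ i : ℕ, ((-1 : ℂ) ^ i * zchoose r i) • Y u (p + r - i) (Y v (q + i) w))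
          - ∑ᶠ i : ℕ, ((-1 : ℂ) ^ i * zchoose r i * (-1 : ℂ) ^ r) •
              Y v (q + r - i) (Y u (p + i) w))
    (n : ℕ) :
    (∀ (d : ℤ) (u : V) (w : M), u ∈ gr d → w ∈ On Y gr n →
        lstar Y n d u w ∈ On Y gr n ∧ rstar Y n d u w ∈ On Y gr n) ∧
    (∀ (d : ℤ) (u : V), u ∈ gr d →
      (∃ Lu : (M ⧸ On Y gr n) →ₗ[ℂ] (M ⧸ On Y gr n),
        ∀ w : M, Lu (Submodule.Quotient.mk w) = Submodule.Quotient.mk (lstar Y n d u w)) ∧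
      (∃ Ru : (M ⧸ On Y gr n) →ₗ[ℂ] (M ⧸ On Y gr n),
        ∀ w : M, Ru (Submodule.Quotient.mk w) = Submodule.Quotient.mk (rstar Y n d u w))) := by
  have hTgr (d : ℤ) (u : V) (hu : u ∈ gr d) : YV ω 0 u ∈ gr (d + 1) := by
    convert hgr 2 d ω u hω hu 0 using 2
    ring
  set s : ℕ → ℂ := fun m => (-1 : ℂ) ^ m * ((m + n).choose n : ℂ)
  have hinv {d : ℤ} {u : V} (hu : u ∈ gr d) {c : ℕ → ℤ}
      (hc : ∀ m, d - 1 ≤ c m ∧ c m ≤ d + n + m) :=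
    On_le_comap_residueSumₗ htr htrV hB hgr hL1der hTgr hu s hc
  have hL {d : ℤ} {u : V} (hu : u ∈ gr d) := hinv hu (c := fun _ => d + n) fun m => by omega
  have hR {d : ℤ} {u : V} (hu : u ∈ gr d) := hinv hu (c := fun m => d + m - 1) fun m => by omega
  refine ⟨fun d u w hu hw => ?_, fun d u hu =>
    ⟨⟨(On Y gr n).mapQ _ _ (hL hu), fun w => ?_⟩, ⟨(On Y gr n).mapQ _ _ (hR hu), fun w => ?_⟩⟩⟩
  · rw [lstar_eq_residueSumₗ htr, rstar_eq_residueSumₗ htr]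
    exact ⟨hL hu hw, hR hu hw⟩
  · rw [Submodule.mapQ_apply, lstar_eq_residueSumₗ htr]
  · rw [Submodule.mapQ_apply, rstar_eq_residueSumₗ htr]

/-- `V *ₙ O_n(M) ⊆ O_n(M)` and `O_n(M) *ₙ V ⊆ O_n(M)`; in particular the
quotient `𝔸_n(M) = M / O_n(M)` carries well-defined left and right actions of (homogeneous
elements of) `V`, compatible with the products `*ₙ`. -/
theorem statement8
    (YV : V →ₗ[ℂ] ℤ → V →ₗ[ℂ] V) (Y : V →ₗ[ℂ] ℤ → M →ₗ[ℂ] M)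
    (gr : ℤ → Submodule ℂ V) (vac ω : V)
    -- truncation conditions
    (htr : ∀ (u : V) (w : M), ∃ K : ℕ, ∀ i : ℤ, (K : ℤ) ≤ i → Y u i w = 0)
    (htrV : ∀ u v : V, ∃ K : ℕ, ∀ i : ℤ, (K : ℤ) ≤ i → YV u i v = 0)
    -- vacuum and creation properties
    (hvac : ∀ (i : ℤ) (w : M), Y vac i w = if i = -1 then w else 0)
    (hcreate : ∀ u : V, YV u (-1) vac = u)
    -- grading: `u_i` maps `gr e` into `gr (d + e - i - 1)`, `ω` has weight `2`
    (hgr : ∀ (d e : ℤ) (u v : V), u ∈ gr d → v ∈ gr e →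
      ∀ i : ℤ, YV u i v ∈ gr (d + e - i - 1))
    (hω : ω ∈ gr 2)
    -- `L(0)` eigenvalue property and the `L(-1)`-derivative property on `M` and on `V`
    (hL0 : ∀ (d : ℤ) (u : V), u ∈ gr d → YV ω 1 u = (d : ℂ) • u)
    (hL1der : ∀ (u : V) (i : ℤ) (w : M), Y (YV ω 0 u) i w = (-(i : ℂ)) • Y u (i - 1) w)
    (hL1derV : ∀ (u v : V) (i : ℤ), YV (YV ω 0 u) i v = (-(i : ℂ)) • YV u (i - 1) v)
    -- the Borcherds (Jacobi) identity for the module `M` and for `V` itself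
    (hB : ∀ (u v : V) (w : M) (p q r : ℤ),
      (∑ᶠ i : ℕ, zchoose p i • Y (YV u (r + i) v) (p + q - i) w)
        = (∑ᶠ i : ℕ, ((-1 : ℂ) ^ i * zchoose r i) • Y u (p + r - i) (Y v (q + i) w))
          - ∑ᶠ i : ℕ, ((-1 : ℂ) ^ i * zchoose r i * (-1 : ℂ) ^ r) •
              Y v (q + r - i) (Y u (p + i) w))
    (hBV : ∀ (u v x : V) (p q r : ℤ),
      (∑ᶠ i : ℕ, zchoose p i • YV (YV u (r + i) v) (p + q - i) x)
        = (∑ᶠ i : ℕ, ((-1 : ℂ) ^ i * zchoose r i) • YV u (p + r - i) (YV v (q + i) x))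
          - ∑ᶠ i : ℕ, ((-1 : ℂ) ^ i * zchoose r i * (-1 : ℂ) ^ r) •
              YV v (q + r - i) (YV u (p + i) x))
    (n : ℕ) :
    (∀ (d : ℤ) (u : V) (w : M), u ∈ gr d → w ∈ On Y gr n →
        lstar Y n d u w ∈ On Y gr n ∧ rstar Y n d u w ∈ On Y gr n) ∧
    (∀ (d : ℤ) (u : V), u ∈ gr d →
      (∃ Lu : (M ⧸ On Y gr n) →ₗ[ℂ] (M ⧸ On Y gr n),
        ∀ w : M, Lu (Submodule.Quotient.mk w) = Submodule.Quotient.mk (lstar Y n d u w)) ∧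
      (∃ Ru : (M ⧸ On Y gr n) →ₗ[ℂ] (M ⧸ On Y gr n),
        ∀ w : M, Ru (Submodule.Quotient.mk w) = Submodule.Quotient.mk (rstar Y n d u w))) :=
  statement8_general YV Y gr ω htr htrV hgr hω hL1der hB n
end

section
/- Let g(z) = ∑_{n ≥ N} v_n z^{n+α} be a formal series with coefficients in a vector space V (N ∈ ℤ, α ∈ ℂ) and f(z) = ∑_{n > 0} c_n z^n a formal power series with c_1 ≠ 0 having no constant term. Then Res_z g(z) = Res_{z_0} ( g(f(z_0)) · (d/dz_0) f(z_0) ), where Res extracts the coefficient of z^{-1}. -/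
open Finset

/-!
Statement 13 (Zhu's change-of-variable formula for formal residues).
A series `g(z) = ∑_{n ≥ N} v_n z^{n+α}` with coefficients `v : ℤ → V` (vanishing below
`N`) is encoded by its coefficient function; `Res_z g` is the coefficient of `z^{-1}`,
i.e. `v m` for the (unique) integer `m` with `m + α = -1`, and `0` if there is no such
integer.  For `f(z) = ∑_{n > 0} c_n z^n` with `c 1 ≠ 0` write `f(z) = c 1 · z · (1 + u(z))`
with `u` a power series without constant term; then
`g(f(z₀)) · f'(z₀) = ∑_n v_n (c 1)^{n+α} z₀^{n+α} (1+u(z₀))^{n+α} f'(z₀)`,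
whose coefficient of `z₀^{m+α}` is
`∑_{N ≤ n ≤ m} (c 1)^{n+α} · coeff_{m-n}((1+u)^{n+α} · f') • v n`.
The theorem states `Res_z g(z) = Res_{z₀} ( g(f(z₀)) · f'(z₀) )`.
-/

/-- The generalized binomial coefficient `C(β, k)` for `β : ℂ`. -/
noncomputable def cchoose (β : ℂ) (k : ℕ) : ℂ :=
  (∏ i ∈ range k, (β - (i : ℂ))) / (k.factorial : ℂ)

/-- The power series `u(z)` with `f(z) = c 1 · z · (1 + u(z))`, i.e.
`u(z) = ∑_{k ≥ 1} (c (k+1) / c 1) z^k`. -/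
noncomputable def useries (c : ℕ → ℂ) : PowerSeries ℂ :=
  PowerSeries.mk fun k => if k = 0 then 0 else c (k + 1) / c 1

/-- The binomial series `(1 + u(z))^β = ∑_k C(β,k) u(z)^k`. -/
noncomputable def binomPow (c : ℕ → ℂ) (β : ℂ) : PowerSeries ℂ :=
  PowerSeries.mk fun j =>
    ∑ k ∈ range (j + 1), cchoose β k * PowerSeries.coeff j ((useries c) ^ k)

/-- The formal derivative `f'(z) = ∑_{j ≥ 0} (j+1) c_{j+1} z^j` of
`f(z) = ∑_{n > 0} c_n z^n`. -/
noncomputable def fder (c : ℕ → ℂ) : PowerSeries ℂ :=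
  PowerSeries.mk fun j => ((j + 1 : ℕ) : ℂ) * c (j + 1)

/-!
Let `m + α = -1`. The term `v n` of the residue carries the coefficient of `z^(m-n)` in
`(1 + u)^(n+α) f'`, and `f' = c₁ (1 + u + z u')`. For `j = m - n ≥ 1` this is the `z^j`-coefficient
of `c₁ ((1 + u)^(-j) + z u' (1 + u)^(-j-1))`, which vanishes: applying `z d/dz` to `(1 + u)^(-j)`
multiplies its `z^j`-coefficient by `j` and produces `-j z u' (1 + u)^(-j-1)`. Only `n = m`
survives, with coefficient `c₁^(-1) · c₁ = 1`.
-/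

lemma cchoose_zero (β : ℂ) : cchoose β 0 = 1 := by simp [cchoose]

lemma succ_mul_cchoose_succ (β : ℂ) (k : ℕ) :
    ((k : ℂ) + 1) * cchoose β (k + 1) = β * cchoose (β - 1) k := by
  have hprod : ∏ i ∈ range (k + 1), (β - i) = β * ∏ i ∈ range k, (β - 1 - i) := by
    rw [prod_range_succ', mul_comm, Nat.cast_zero, sub_zero]
    exact congrArg (β * ·) (prod_congr rfl fun i _ => by push_cast; ring)
  unfold cchoose
  rw [hprod, Nat.factorial_succ]
  push_cast
  field_simp

lemma succ_mul_cchoose_succ_eq_sub_mul (β : ℂ) (k : ℕ) :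
    ((k : ℂ) + 1) * cchoose β (k + 1) = (β - k) * cchoose β k := by
  unfold cchoose
  rw [prod_range_succ, Nat.factorial_succ]
  push_cast
  field_simp

lemma cchoose_add_one_succ (β : ℂ) (k : ℕ) :
    cchoose (β + 1) (k + 1) = cchoose β (k + 1) + cchoose β k := by
  have hk : (k : ℂ) + 1 ≠ 0 := by exact_mod_cast k.succ_ne_zero
  refine mul_left_cancel₀ hk ?_
  rw [mul_add, succ_mul_cchoose_succ, succ_mul_cchoose_succ_eq_sub_mul, add_sub_cancel_right]
  ring

namespace PowerSeries

lemma coeff_pow_eq_zero_of_lt {R : Type*} [CommRing R] {u : R⟦X⟧} (hu : constantCoeff u = 0)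
    {j k : ℕ} (h : j < k) : coeff j (u ^ k) = 0 :=
  X_pow_dvd_iff.mp (pow_dvd_pow_of_dvd (X_dvd_iff.mpr hu) k) j h

lemma coeff_X_mul_derivative {R : Type*} [CommRing R] (f : R⟦X⟧) (j : ℕ) :
    coeff j (X * d⁄dX R f) = j * coeff j f := by
  cases j with
  | zero => simp
  | succ j => rw [coeff_succ_X_mul, coeff_derivative, mul_comm]; push_cast; rfl

lemma natCast_mul_coeff_pow {R : Type*} [CommRing R] (u : R⟦X⟧) (j k : ℕ) :
    (j : R) * coeff j (u ^ k) = k * coeff j (u ^ (k - 1) * (X * d⁄dX R u)) := by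
  rw [← coeff_X_mul_derivative, derivative_pow, ← map_natCast (C (R := R)) k,
    ← coeff_C_mul]
  congr 1
  ring


section BinomialSeries

/-- `(1 + u)^β = ∑_k C(β,k) u^k`; truncating the sum at `k ≤ j` is harmless only when `u` has
no constant term. -/
noncomputable def binomSeries (u : ℂ⟦X⟧) (β : ℂ) : ℂ⟦X⟧ :=
  mk fun j => ∑ k ∈ range (j + 1), cchoose β k * coeff j (u ^ k)

variable {u : ℂ⟦X⟧}

lemma constantCoeff_binomSeries (β : ℂ) : constantCoeff (binomSeries u β) = 1 := by
  simp [binomSeries, cchoose_zero]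

lemma coeff_binomSeries_of_le (hu : constantCoeff u = 0) (β : ℂ) {i j : ℕ} (hij : i ≤ j) :
    coeff i (binomSeries u β) = ∑ k ∈ range (j + 1), cchoose β k * coeff i (u ^ k) := by
  rw [binomSeries, coeff_mk]
  refine sum_subset (range_subset_range.mpr (by omega)) fun k _ hk => ?_
  rw [coeff_pow_eq_zero_of_lt hu (by simpa using hk), mul_zero]

lemma coeff_binomSeries_mul (hu : constantCoeff u = 0) (β : ℂ) (g : ℂ⟦X⟧) (j : ℕ) :
    coeff j (binomSeries u β * g) =
      ∑ k ∈ range (j + 1), cchoose β k * coeff j (u ^ k * g) := by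
  simp only [coeff_mul, mul_sum]
  rw [sum_comm]
  refine sum_congr rfl fun p hp => ?_
  rw [coeff_binomSeries_of_le hu β (Finset.HasAntidiagonal.antidiagonal.fst_le hp), sum_mul]
  exact sum_congr rfl fun k _ => by ring

lemma binomSeries_add_one (hu : constantCoeff u = 0) (β : ℂ) :
    binomSeries u (β + 1) = binomSeries u β * (1 + u) := by
  ext j
  rw [coeff_binomSeries_mul hu]
  simp only [mul_add, mul_one, ← pow_succ, map_add, binomSeries, coeff_mk]
  rw [sum_add_distrib, sum_range_succ' (fun k => cchoose (β + 1) k * _),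
    sum_range_succ' (fun k => cchoose β k * _), sum_range_succ (fun k => cchoose β k * _),
    coeff_pow_eq_zero_of_lt hu (Nat.lt_succ_self j)]
  simp only [cchoose_add_one_succ, add_mul, sum_add_distrib, cchoose_zero]
  ring

lemma natCast_mul_coeff_binomSeries (hu : constantCoeff u = 0) (γ : ℂ) (j : ℕ) :
    (j : ℂ) * coeff j (binomSeries u γ) =
      γ * coeff j (binomSeries u (γ - 1) * (X * d⁄dX ℂ u)) := by
  set w := X * d⁄dX ℂ u
  have hlast : coeff j (u ^ j * w) = 0 := by
    refine X_pow_dvd_iff.mp ?_ j (Nat.lt_succ_self j)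
    rw [pow_succ]
    exact mul_dvd_mul (pow_dvd_pow_of_dvd (X_dvd_iff.mpr hu) j) (dvd_mul_right X _)
  calc (j : ℂ) * coeff j (binomSeries u γ)
      = ∑ k ∈ range (j + 1), (k : ℂ) * cchoose γ k * coeff j (u ^ (k - 1) * w) := by
        rw [binomSeries, coeff_mk, mul_sum]
        refine sum_congr rfl fun k _ => ?_
        rw [mul_left_comm, natCast_mul_coeff_pow]
        ring
    _ = ∑ k ∈ range j, γ * (cchoose (γ - 1) k * coeff j (u ^ k * w)) := by
        rw [sum_range_succ']
        simp only [Nat.cast_zero, zero_mul, add_zero, Nat.add_sub_cancel]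
        refine sum_congr rfl fun k _ => ?_
        push_cast
        rw [succ_mul_cchoose_succ, mul_assoc]
    _ = γ * coeff j (binomSeries u (γ - 1) * w) := by
        rw [coeff_binomSeries_mul hu, sum_range_succ, hlast, mul_zero, add_zero, mul_sum]

lemma coeff_binomSeries_mul_derivative_eq_zero (hu : constantCoeff u = 0) {j : ℕ} (hj : j ≠ 0) :
    coeff j (binomSeries u (-(j + 1)) * (1 + u + X * d⁄dX ℂ u)) = 0 := by
  have hj' : (j : ℂ) ≠ 0 := Nat.cast_ne_zero.mpr hj
  have hsucc := binomSeries_add_one hu (-(j + 1))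
  have hderiv := natCast_mul_coeff_binomSeries hu (-j) j
  rw [show -((j : ℂ) + 1) + 1 = -j by ring] at hsucc
  rw [show -(j : ℂ) - 1 = -(j + 1) by ring] at hderiv
  rw [mul_add, ← hsucc, map_add]
  refine mul_left_cancel₀ hj' ?_
  linear_combination hderiv

end BinomialSeries

end PowerSeries

open PowerSeries

lemma constantCoeff_useries (c : ℕ → ℂ) : constantCoeff (useries c) = 0 := by
  simp [useries]

lemma binomPow_eq_binomSeries (c : ℕ → ℂ) (β : ℂ) : binomPow c β = binomSeries (useries c) β :=
  rfl

lemma fder_eq (c : ℕ → ℂ) (hc1 : c 1 ≠ 0) :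
    fder c = C (c 1) * (1 + useries c + X * d⁄dX ℂ (useries c)) := by
  ext k
  rw [coeff_C_mul]
  cases k with
  | zero => simp [fder, useries]
  | succ k =>
    simp only [fder, useries, coeff_mk, map_add, coeff_one, coeff_succ_X_mul, coeff_derivative,
      if_neg k.succ_ne_zero]
    field_simp
    push_cast
    ring

lemma coeff_binomPow_mul_fder_eq_zero (c : ℕ → ℂ) (hc1 : c 1 ≠ 0) {j : ℕ} (hj : j ≠ 0) :
    coeff j (binomPow c (-(j + 1)) * fder c) = 0 := by
  rw [fder_eq c hc1, mul_left_comm, coeff_C_mul, binomPow_eq_binomSeries,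
    coeff_binomSeries_mul_derivative_eq_zero (constantCoeff_useries c) hj, mul_zero]

lemma coeff_zero_binomPow_mul_fder (c : ℕ → ℂ) (β : ℂ) :
    coeff 0 (binomPow c β * fder c) = c 1 := by
  simp [binomPow_eq_binomSeries, constantCoeff_binomSeries, fder]

open scoped Classical in
theorem statement13_general {V : Type*} [AddCommGroup V] [Module ℂ V]
    (v : ℤ → V) (N : ℤ) (hv : ∀ n : ℤ, n < N → v n = 0)
    (α : ℂ) (c : ℕ → ℂ) (hc1 : c 1 ≠ 0) :
    (if h : ∃ m : ℤ, (m : ℂ) + α = -1 then v h.choose else 0) =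
      (if h : ∃ m : ℤ, (m : ℂ) + α = -1 then
        ∑ n ∈ Finset.Icc N h.choose,
          (c 1 ^ ((n : ℂ) + α) *
            PowerSeries.coeff (h.choose - n).toNat (binomPow c ((n : ℂ) + α) * fder c)) • v n
      else 0) := by
  split_ifs with h
  · set m := h.choose
    have hm : (m : ℂ) + α = -1 := h.choose_spec
    have hexp : ∀ n ≤ m, (n : ℂ) + α = -(((m - n).toNat : ℕ) + 1) := fun n hn => by
      have hcast : (((m - n).toNat : ℤ) : ℂ) = ((m - n : ℤ) : ℂ) := by
        rw [Int.toNat_of_nonneg (by omega)]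
      push_cast at hcast
      linear_combination hm + hcast
    rw [sum_eq_single m]
    · rw [hm, sub_self, Int.toNat_zero, coeff_zero_binomPow_mul_fder, Complex.cpow_neg_one,
        inv_mul_cancel₀ hc1, one_smul]
    · intro n hn hne
      have hnm : n < m := lt_of_le_of_ne (mem_Icc.mp hn).2 hne
      rw [hexp n hnm.le, coeff_binomPow_mul_fder_eq_zero c hc1 (by omega), mul_zero, zero_smul]
    · intro hmN
      rw [hv m (by simpa using hmN), smul_zero]
  · rfl

open scoped Classical in
/-- `Res_z g(z) = Res_{z₀} ( g(f(z₀)) · (d/dz₀) f(z₀) )`. -/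
theorem statement13 {V : Type*} [AddCommGroup V] [Module ℂ V]
    (v : ℤ → V) (N : ℤ) (hv : ∀ n : ℤ, n < N → v n = 0)
    (α : ℂ) (c : ℕ → ℂ) (hc0 : c 0 = 0) (hc1 : c 1 ≠ 0) :
    (if h : ∃ m : ℤ, (m : ℂ) + α = -1 then v h.choose else 0) =
      (if h : ∃ m : ℤ, (m : ℂ) + α = -1 then
        ∑ n ∈ Finset.Icc N h.choose,
          (c 1 ^ ((n : ℂ) + α) *
            PowerSeries.coeff (h.choose - n).toNat (binomPow c ((n : ℂ) + α) * fder c)) • v n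
      else 0) :=
  statement13_general v N hv α c hc1
end

section
/- Let V be a vertex operator algebra and M = ⊕_{m≥0} M(m) an admissible V-module. Then for each m ≤ n, the homogeneous subspace M(m) is an A_n(V)-submodule of Ω_n(M) under the action v + O_n(V) ↦ o(v) = v_{wt v-1}. -/
open Finset

variable {V M : Type*} [AddCommGroup V] [Module ℂ V] [AddCommGroup M] [Module ℂ M]

/-- `Ω_n(W) = {w ∈ W : u_m w = 0 for all homogeneous u of weight d and all m > d - 1 + n}`. -/
def Omegan (Y : V →ₗ[ℂ] ℤ → M →ₗ[ℂ] M) (gr : ℤ → Submodule ℂ V) (n : ℕ) :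
    Submodule ℂ M where
  carrier := {w | ∀ (d : ℤ) (u : V), u ∈ gr d → ∀ m : ℤ, d - 1 + n < m → Y u m w = 0}
  add_mem' := by
    intro a b ha hb d u hu m hm
    rw [map_add, ha d u hu m hm, hb d u hu m hm, add_zero]
  zero_mem' := by
    intro d u hu m hm
    exact map_zero _
  smul_mem' := by
    intro c w hw d u hu m hm
    rw [map_smul, hw d u hu m hm, smul_zero]

/-!
The mode `v_k` of a vector of weight `d` shifts the degree of `M` by `d - k - 1`. For
`k > d - 1 + n` this shift is below `-n ≤ -m`, so it sends `M(m)` into a negative degree, where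
`M` vanishes; the zero mode `o(v) = v_{d-1}` shifts the degree by `0`.
-/

section Admissible

variable {Y : V →ₗ[ℂ] ℤ → M →ₗ[ℂ] M} {gr : ℤ → Submodule ℂ V} {grM : ℤ → Submodule ℂ M}

theorem grade_le_Omegan (hgrMneg : ∀ m : ℤ, m < 0 → grM m = ⊥)
    (hadm : ∀ (d m : ℤ) (v : V) (w : M), v ∈ gr d → w ∈ grM m →
      ∀ k : ℤ, Y v k w ∈ grM (m + d - k - 1))
    {m : ℤ} {n : ℕ} (hmn : m ≤ n) : grM m ≤ Omegan Y gr n := by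
  intro w hw d u hu k hk
  have hneg : m + d - k - 1 < 0 := by omega
  simpa [hgrMneg _ hneg] using hadm d m u w hu hw k

theorem zero_mode_mem_grade
    (hadm : ∀ (d m : ℤ) (v : V) (w : M), v ∈ gr d → w ∈ grM m →
      ∀ k : ℤ, Y v k w ∈ grM (m + d - k - 1))
    {d m : ℤ} {v : V} (hv : v ∈ gr d) {w : M} (hw : w ∈ grM m) : Y v (d - 1) w ∈ grM m := by
  convert hadm d m v w hv hw (d - 1) using 2
  ring

end Admissible

theorem statement15_general
    (Y : V →ₗ[ℂ] ℤ → M →ₗ[ℂ] M)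
    (gr : ℤ → Submodule ℂ V)
    (n : ℕ)
    (grM : ℤ → Submodule ℂ M)
    (hgrMneg : ∀ m : ℤ, m < 0 → grM m = ⊥)
    (hadm : ∀ (d m : ℤ) (v : V) (w : M), v ∈ gr d → w ∈ grM m →
      ∀ k : ℤ, Y v k w ∈ grM (m + d - k - 1)) :
    ∀ m : ℕ, (m : ℤ) ≤ n →
      grM m ≤ Omegan Y gr n ∧
      (∀ (d : ℤ) (v : V), v ∈ gr d → ∀ w ∈ grM m, Y v (d - 1) w ∈ grM m) :=
  fun _ hm => ⟨grade_le_Omegan hgrMneg hadm hm, fun _ _ hv _ hw => zero_mode_mem_grade hadm hv hw⟩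

/-- If `M = ⊕_{m ≥ 0} M(m)` is an admissible `V`-module (the grading
`grM` vanishes in negative degrees and satisfies `v_k M(m) ⊆ M(m + wt v - k - 1)`), then
for each `m ≤ n` the homogeneous subspace `M(m)` is contained in `Ω_n(M)` and is invariant
under all of the operators `o(v) = v_{wt v - 1}`, i.e. `M(m)` is an `A_n(V)`-submodule
of `Ω_n(M)`. -/
theorem statement15
    (YV : V →ₗ[ℂ] ℤ → V →ₗ[ℂ] V) (Y : V →ₗ[ℂ] ℤ → M →ₗ[ℂ] M)
    (gr : ℤ → Submodule ℂ V) (vac ω : V)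
    -- truncation conditions
    (htr : ∀ (u : V) (w : M), ∃ K : ℕ, ∀ i : ℤ, (K : ℤ) ≤ i → Y u i w = 0)
    (htrV : ∀ u v : V, ∃ K : ℕ, ∀ i : ℤ, (K : ℤ) ≤ i → YV u i v = 0)
    -- vacuum and creation properties
    (hvac : ∀ (i : ℤ) (w : M), Y vac i w = if i = -1 then w else 0)
    (hcreate : ∀ u : V, YV u (-1) vac = u)
    -- grading: `u_i` maps `gr e` into `gr (d + e - i - 1)`, `ω` has weight `2`
    (hgr : ∀ (d e : ℤ) (u v : V), u ∈ gr d → v ∈ gr e →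
      ∀ i : ℤ, YV u i v ∈ gr (d + e - i - 1))
    (hω : ω ∈ gr 2)
    -- `L(0)` eigenvalue property and the `L(-1)`-derivative property on `M` and on `V`
    (hL0 : ∀ (d : ℤ) (u : V), u ∈ gr d → YV ω 1 u = (d : ℂ) • u)
    (hL1der : ∀ (u : V) (i : ℤ) (w : M), Y (YV ω 0 u) i w = (-(i : ℂ)) • Y u (i - 1) w)
    (hL1derV : ∀ (u v : V) (i : ℤ), YV (YV ω 0 u) i v = (-(i : ℂ)) • YV u (i - 1) v)
    -- the Borcherds (Jacobi) identity for the module `M` and for `V` itself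
    (hB : ∀ (u v : V) (w : M) (p q r : ℤ),
      (∑ᶠ i : ℕ, zchoose p i • Y (YV u (r + i) v) (p + q - i) w)
        = (∑ᶠ i : ℕ, ((-1 : ℂ) ^ i * zchoose r i) • Y u (p + r - i) (Y v (q + i) w))
          - ∑ᶠ i : ℕ, ((-1 : ℂ) ^ i * zchoose r i * (-1 : ℂ) ^ r) •
              Y v (q + r - i) (Y u (p + i) w))
    (hBV : ∀ (u v x : V) (p q r : ℤ),
      (∑ᶠ i : ℕ, zchoose p i • YV (YV u (r + i) v) (p + q - i) x)
        = (∑ᶠ i : ℕ, ((-1 : ℂ) ^ i * zchoose r i) • YV u (p + r - i) (YV v (q + i) x))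
          - ∑ᶠ i : ℕ, ((-1 : ℂ) ^ i * zchoose r i * (-1 : ℂ) ^ r) •
              YV v (q + r - i) (YV u (p + i) x))
    (n : ℕ)
    (grM : ℤ → Submodule ℂ M)
    (hgrMneg : ∀ m : ℤ, m < 0 → grM m = ⊥)
    (hadm : ∀ (d m : ℤ) (v : V) (w : M), v ∈ gr d → w ∈ grM m →
      ∀ k : ℤ, Y v k w ∈ grM (m + d - k - 1))
    (hsum : ∀ w : M, w ∈ ⨆ m : ℤ, grM m) :
    ∀ m : ℕ, (m : ℤ) ≤ n →
      grM m ≤ Omegan Y gr n ∧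
      (∀ (d : ℤ) (v : V), v ∈ gr d → ∀ w ∈ grM m, Y v (d - 1) w ∈ grM m) :=
  statement15_general Y gr n grM hgrMneg hadm
end
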